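/- Let F be a transitive countable relational structure with a bounded 1-supported metric-like stationary independence relation ⫫. If g ∈ Aut(F) is not the identity, then there is a ∈ F and h ∈ Aut(F) which is a product of ‖⫫‖ conjugates of g such that a ⫫_∅ h(a). -/

import Mathlib

open FirstOrder

namespace PaperSIR

/-- The group structure on the automorphism group of a first-order structure. -/
instance autGroup {L : FirstOrder.Language} {F : Type*} [L.Structure F] :
    Group (F ≃[L] F) where
  mul f g := f.comp g
  one := FirstOrder.Language.Equiv.refl L F
  inv := FirstOrder.Language.Equiv.symm
  mul_assoc f g h := (FirstOrder.Language.Equiv.comp_assoc h g f).symm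
  one_mul := FirstOrder.Language.Equiv.refl_comp
  mul_one := FirstOrder.Language.Equiv.comp_refl
  inv_mul_cancel := FirstOrder.Language.Equiv.symm_comp_self

variable {L : FirstOrder.Language} {F : Type*} [L.Structure F] [DecidableEq F]

/-- The tuples `a` and `a'` have the same type over the finite set `X`, i.e. some
automorphism of `F` fixing `X` pointwise maps `a` to `a'`. -/
def SameTypeOver (L : FirstOrder.Language) {F : Type*} [L.Structure F] (X : Finset F) {n : ℕ} (a a' : Fin n → F) : Prop :=
  ∃ g : F ≃[L] F, (∀ x ∈ X, g x = x) ∧ ∀ i, g (a i) = a' i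

/-- The finite set enumerated by a tuple. -/
def fset {n : ℕ} (a : Fin n → F) : Finset F :=
  Finset.image a Finset.univ

/-- A stationary independence relation (SIR) on `F`: a ternary relation on finite
subsets of `F` satisfying Invariance, Symmetry, Monotonicity, Existence, Transitivity
and Stationarity. -/
structure IsSIR (indep : Finset F → Finset F → Finset F → Prop) : Prop where
  invariance : ∀ (g : F ≃[L] F) (A C B : Finset F),
    indep A C B ↔ indep (A.image g) (C.image g) (B.image g)
  symmetry : ∀ A C B, indep A C B → indep B C A
  monotonicity_left : ∀ A C B D, indep A C (B ∪ D) → indep A C B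
  monotonicity_right : ∀ A C B D, indep A C (B ∪ D) → indep A (B ∪ C) D
  existence : ∀ {n : ℕ} (a : Fin n → F) (C B : Finset F),
    ∃ a' : Fin n → F, SameTypeOver L C a a' ∧ indep (fset a') C B
  transitivity : ∀ A C B B', indep A C B → indep A (B ∪ C) B' → indep A C B'
  stationarity : ∀ {n : ℕ} (a a' : Fin n → F) (C B : Finset F),
    SameTypeOver L C a a' → indep (fset a) C B → indep (fset a') C B →
    SameTypeOver L (B ∪ C) a a'

/-- The three extra conditions making a SIR metric-like. -/
structure IsMetricLike (indep : Finset F → Finset F → Finset F → Prop) : Prop where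
  not_self : ∀ (a : F) (A : Finset F), a ∉ A → ¬ indep {a} A {a}
  exists_dep : ∀ a : F, ∃ b : F, b ≠ a ∧ ¬ indep {a} ∅ {b}
  perfect_triviality : ∀ A C B C', indep A C B → C ⊆ C' → indep A C' B

/-- A SIR is 1-supported if whenever `a ⫫_C b` there is `C' ⊆ C` with `|C'| ≤ 1`
and `a ⫫_{C'} b`. -/
def OneSupported (indep : Finset F → Finset F → Finset F → Prop) : Prop :=
  ∀ (a b : F) (C : Finset F), indep {a} C {b} →
    ∃ C' ⊆ C, C'.card ≤ 1 ∧ indep {a} C' {b}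

/-- A sequence of pairwise distinct vertices is geodesic if `aᵢ ⫫_{aⱼ} aₖ`
whenever `i < j < k`. -/
def IsGeodesic (indep : Finset F → Finset F → Finset F → Prop)
    {n : ℕ} (a : Fin n → F) : Prop :=
  Function.Injective a ∧ ∀ i j k : Fin n, i < j → j < k → indep {a i} {a j} {a k}

/-- `k₀` is a bound for the SIR: every geodesic sequence `a₀, …, a_k` with `k ≥ k₀`
satisfies `a₀ ⫫_∅ a_k`. -/
def BoundedBy (indep : Finset F → Finset F → Finset F → Prop) (k₀ : ℕ) : Prop :=
  ∀ k : ℕ, k₀ ≤ k → ∀ a : Fin (k + 1) → F, IsGeodesic indep a →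
    indep {a 0} ∅ {a (Fin.last k)}

/-- A SIR is bounded if some `k₀` is a bound for it. -/
def Bounded (indep : Finset F → Finset F → Finset F → Prop) : Prop :=
  ∃ k₀ : ℕ, BoundedBy indep k₀

/-- `‖⫫‖`: the least bound of a bounded SIR. -/
noncomputable def sirNorm (indep : Finset F → Finset F → Finset F → Prop) : ℕ :=
  sInf {k₀ : ℕ | BoundedBy indep k₀}

/-- `F` is transitive: all elements have the same type, i.e. `Aut(F)` acts
transitively. -/
def TransitiveStruct (L : FirstOrder.Language) (F : Type*) [L.Structure F] : Prop :=
  ∀ a b : F, ∃ g : F ≃[L] F, g a = b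

/-- `b` is almost free from `a`: `¬ a ⫫_∅ b` and every `c ∉ {a, b}` with `a ⫫_b c`
satisfies `a ⫫_∅ c`. -/
def AlmostFreeFrom (indep : Finset F → Finset F → Finset F → Prop) (b a : F) : Prop :=
  ¬ indep {a} ∅ {b} ∧
    ∀ c : F, c ≠ a → c ≠ b → indep {a} {b} {c} → indep {a} ∅ {c}

/-- `g` moves the type `tp(x/X)` almost maximally: some realisation `x'` of it
satisfies `x' ⫫_X g(x')`. -/
def MovesAlmostMaximally (indep : Finset F → Finset F → Finset F → Prop)
    (g : F ≃[L] F) (X : Finset F) (x : F) : Prop :=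
  ∃ x' : F, SameTypeOver L X ![x] ![x'] ∧ indep {x'} X {g x'}

/-- `g` moves the type `tp(x/X)` by distance `k`: there is a realisation `x'` and a
geodesic sequence `x' = c₀, …, c_k = g(x')`. -/
def MovesByDistance (indep : Finset F → Finset F → Finset F → Prop)
    (g : F ≃[L] F) (X : Finset F) (x : F) (k : ℕ) : Prop :=
  ∃ x' : F, SameTypeOver L X ![x] ![x'] ∧
    ∃ c : Fin (k + 1) → F, IsGeodesic indep c ∧ c 0 = x' ∧ c (Fin.last k) = g x'

end PaperSIR

open PaperSIR

section Aux

open FirstOrder PaperSIR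

variable {L : FirstOrder.Language} {F : Type*} [L.Structure F] [DecidableEq F]

lemma aut_mul_apply (f g : F ≃[L] F) (x : F) : (f * g) x = f (g x) := rfl

lemma aut_one_apply (x : F) : (1 : F ≃[L] F) x = x := rfl

lemma aut_inv_apply (f : F ≃[L] F) (x : F) : f⁻¹ (f x) = x :=
  FirstOrder.Language.Equiv.symm_apply_apply f x

lemma aut_injective (f : F ≃[L] F) : Function.Injective f := fun x y h => by
  have := congrArg (fun z => f⁻¹ z) h
  simpa [aut_inv_apply] using this

lemma fset_one (a : Fin 1 → F) : fset a = {a 0} := by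
  ext x
  simp only [fset, Finset.mem_image, Finset.mem_univ, true_and, Finset.mem_singleton]
  constructor
  · rintro ⟨i, rfl⟩; rw [Fin.fin_one_eq_zero i]
  · rintro rfl; exact ⟨0, rfl⟩

/-- Applying a reversed product of automorphisms along a chain. -/
lemma chainProd : ∀ (k : ℕ) (c : Fin (k+1) → F) (v : Fin k → (F ≃[L] F)),
    (∀ i : Fin k, v i (c i.castSucc) = c i.succ) →
    (List.ofFn fun i => v i.rev).prod (c 0) = c (Fin.last k)
  | 0, c, v, _ => by simp [aut_one_apply, Fin.last]
  | (k+1), c, v, h => by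
    have tail := chainProd k (fun i => c i.castSucc) (fun i => v i.castSucc)
      (fun i => by
        have := h i.castSucc
        exact this)
    have hlist : (List.ofFn fun i : Fin (k+1) => v i.rev)
        = v (Fin.last k) :: (List.ofFn fun i : Fin k => v (i.rev).castSucc) := by
      rw [List.ofFn_succ]
      simp [Fin.rev_succ]
    rw [hlist, List.prod_cons, aut_mul_apply]
    have h0 : c (Fin.castSucc 0) = c 0 := by simp
    rw [show ((List.ofFn fun i : Fin k => v (i.rev).castSucc).prod (c 0))
        = c (Fin.last k).castSucc from by simpa [h0] using tail]
    have := h (Fin.last k)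
    simpa [Fin.succ_last] using this

/-- The key chain construction: geodesics of any length whose steps are
realised by conjugates of `g`. -/
lemma chainExists (indep : Finset F → Finset F → Finset F → Prop)
    (htrans : TransitiveStruct L F)
    (hSIR : IsSIR (L := L) indep) (hML : IsMetricLike indep)
    (g : F ≃[L] F) (x₀ : F) (hx₀ : g x₀ ≠ x₀) :
    ∀ k : ℕ, ∃ (c : Fin (k+1) → F) (f : Fin k → (F ≃[L] F)),
      IsGeodesic indep c ∧
      ∀ i : Fin k, c i.succ = (f i * g * (f i)⁻¹) (c i.castSucc)
  | 0 => ⟨fun _ => x₀, Fin.elim0, ⟨fun a b _ => by omega,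
      fun i j k hij hjk => absurd (hij.trans hjk) (by omega)⟩, fun i => i.elim0⟩
  | (k+1) => by
    obtain ⟨c, f, hc, hstep⟩ := chainExists indep htrans hSIR hML g x₀ hx₀ k
    set B : Finset F := Finset.image c Finset.univ with hB
    set cl : F := c (Fin.last k) with hcl
    -- an automorphism sending x₀ to the last point of the chain
    obtain ⟨f₁, hf₁⟩ := htrans x₀ cl
    -- use Existence to find a realisation of tp(g x₀ / x₀) over cl independent of B
    obtain ⟨a', ⟨f₂, hf₂fix, hf₂map⟩, ha'⟩ :=
      hSIR.existence (n := 1) ![f₁ (g x₀)] {cl} B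
    set b : F := a' 0 with hb
    have hf₂cl : f₂ cl = cl := hf₂fix cl (Finset.mem_singleton_self cl)
    set fc : F ≃[L] F := f₂ * f₁ with hfc
    have hfcx : fc x₀ = cl := by rw [hfc, aut_mul_apply, hf₁, hf₂cl]
    have hfcg : fc (g x₀) = b := by
      rw [hfc, aut_mul_apply, hb]
      have := hf₂map 0
      simpa using this
    have hbindep : indep {b} {cl} B := by
      have : fset a' = {b} := fset_one a'
      rwa [this] at ha'
    -- b is not the last point
    have hbne : b ≠ cl := by
      rw [← hfcx, ← hfcg]
      exact fun hEq => hx₀ (aut_injective fc hEq)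
    -- b avoids the whole chain
    have hbnotin : b ∉ B := by
      intro hmem
      have : indep {b} {cl} {b} := by
        apply hSIR.monotonicity_left _ _ _ B
        rwa [Finset.union_eq_right.mpr (Finset.singleton_subset_iff.mpr hmem)]
      exact hML.not_self b {cl} (by simpa using hbne) this
    -- independence of b from earlier chain points over later ones
    have hkey : ∀ i j : Fin (k+1), i < j → indep {c i} {c j} {b} := by
      intro i j hij
      have hmemi : c i ∈ B := Finset.mem_image_of_mem c (Finset.mem_univ i)
      have hmemj : c j ∈ B := Finset.mem_image_of_mem c (Finset.mem_univ j)
      by_cases hjl : j = Fin.last k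
      · subst hjl
        have : indep {b} {cl} {c i} := by
          apply hSIR.monotonicity_left _ _ _ B
          rwa [Finset.union_eq_right.mpr (Finset.singleton_subset_iff.mpr hmemi)]
        exact hSIR.symmetry _ _ _ this
      · have hjlt : j < Fin.last k := lt_of_le_of_ne (Fin.le_last j) hjl
        have h1 : indep {b} {cl} ({c j} ∪ {c i}) := by
          apply hSIR.monotonicity_left _ _ _ B
          rw [Finset.union_eq_right.mpr ?_]
          · exact hbindep
          · intro x hx
            simp only [Finset.mem_union, Finset.mem_singleton] at hx
            rcases hx with rfl | rfl
            exacts [hmemj, hmemi]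
        have h2 : indep {b} ({c j} ∪ {cl}) {c i} := hSIR.monotonicity_right _ _ _ _ h1
        have h3 : indep {c i} ({c j} ∪ {cl}) {b} := hSIR.symmetry _ _ _ h2
        have h4 : indep {c i} {c j} {cl} := hc.2 i j (Fin.last k) hij hjlt
        have h5 : indep {c i} ({cl} ∪ {c j}) {b} := by rwa [Finset.union_comm] at h3
        exact hSIR.transitivity _ _ _ _ h4 h5
    -- the extended chain
    refine ⟨Fin.snoc c b, Fin.snoc f fc, ⟨?_, ?_⟩, ?_⟩
    · -- injectivity
      intro x y hxy
      induction x using Fin.lastCases with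
      | last =>
        induction y using Fin.lastCases with
        | last => rfl
        | cast y₀ =>
          exfalso; apply hbnotin
          rw [Fin.snoc_last, Fin.snoc_castSucc] at hxy
          rw [hxy]; exact Finset.mem_image_of_mem c (Finset.mem_univ y₀)
      | cast x₀' =>
        induction y using Fin.lastCases with
        | last =>
          exfalso; apply hbnotin
          rw [Fin.snoc_last, Fin.snoc_castSucc] at hxy
          rw [← hxy]; exact Finset.mem_image_of_mem c (Finset.mem_univ x₀')
        | cast y₀ =>
          rw [Fin.snoc_castSucc, Fin.snoc_castSucc] at hxy
          rw [hc.1 hxy]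
    · -- geodesic triples
      intro i j m hij hjm
      induction m using Fin.lastCases with
      | last =>
        have hjlt : j < Fin.last (k+1) := hjm
        obtain ⟨j₀, rfl⟩ := Fin.exists_castSucc_eq.mpr (Fin.ne_last_of_lt hjlt)
        obtain ⟨i₀, rfl⟩ := Fin.exists_castSucc_eq.mpr (Fin.ne_last_of_lt (hij.trans hjm))
        rw [Fin.snoc_last, Fin.snoc_castSucc, Fin.snoc_castSucc]
        exact hkey i₀ j₀ (by simpa using hij)
      | cast m₀ =>
        obtain ⟨j₀, rfl⟩ := Fin.exists_castSucc_eq.mpr (Fin.ne_last_of_lt hjm)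
        obtain ⟨i₀, rfl⟩ := Fin.exists_castSucc_eq.mpr (Fin.ne_last_of_lt hij)
        rw [Fin.snoc_castSucc, Fin.snoc_castSucc, Fin.snoc_castSucc]
        exact hc.2 i₀ j₀ m₀ (by simpa using hij) (by simpa using hjm)
    · -- the conjugation steps
      intro i
      induction i using Fin.lastCases with
      | last =>
        have : (fc * g * fc⁻¹) cl = b := by
          rw [aut_mul_apply, aut_mul_apply, ← hfcx, aut_inv_apply, hfcg]
        rw [Fin.succ_last, Fin.snoc_last, Fin.snoc_last, Fin.snoc_castSucc]
        exact this.symm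
      | cast i₀ =>
        rw [Fin.succ_castSucc, Fin.snoc_castSucc, Fin.snoc_castSucc,
          Fin.snoc_castSucc]
        exact hstep i₀

end Aux

theorem statement_12 {L : FirstOrder.Language} [L.IsRelational]
    {F : Type*} [L.Structure F] [Countable F] [DecidableEq F]
    (indep : Finset F → Finset F → Finset F → Prop)
    (htrans : TransitiveStruct L F)
    (hSIR : IsSIR (L := L) indep) (hML : IsMetricLike indep)
    (hbdd : Bounded indep) (h1sup : OneSupported indep)
    (g : F ≃[L] F) (hg : g ≠ 1) :
    ∃ (a : F) (h : F ≃[L] F) (f : Fin (sirNorm indep) → (F ≃[L] F)),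
      h = (List.ofFn fun i => f i * g * (f i)⁻¹).prod ∧
      indep {a} ∅ {h a} := by
  -- find a point moved by g
  have hx : ∃ x : F, g x ≠ x := by
    by_contra hno
    push_neg at hno
    exact hg (by ext x; exact hno x)
  obtain ⟨x₀, hx₀⟩ := hx
  set k : ℕ := sirNorm indep with hk
  obtain ⟨c, f, hc, hstep⟩ := chainExists indep htrans hSIR hML g x₀ hx₀ k
  have hbound : BoundedBy indep k := by
    obtain ⟨k₀, hk₀⟩ := hbdd
    exact Nat.sInf_mem (⟨k₀, hk₀⟩ : {k₀ : ℕ | BoundedBy indep k₀}.Nonempty)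
  refine ⟨c 0, (List.ofFn fun i => (f i.rev) * g * (f i.rev)⁻¹).prod,
    fun i => f i.rev, rfl, ?_⟩
  have happ : (List.ofFn fun i => (f i.rev) * g * (f i.rev)⁻¹).prod (c 0)
      = c (Fin.last k) :=
    chainProd k c (fun i => f i * g * (f i)⁻¹) (fun i => (hstep i).symm)
  rw [happ]
  exact hbound k le_rfl c hc
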